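/- arXiv:1403.3029 — 7 statements merged into one kernel-verified Lean document; each statement's English description precedes it below -/
import Mathlib

section
/- Let κ be a real number with −π/2 < κ < 0. Then every complex number λ satisfying λ = κ·exp(−λ) has negative real part (Re λ < 0). -/
/-!
If `Re z ≥ 0`, taking norms gives `|Im z| ≤ |z| = |κ| e^{-Re z} ≤ |κ| < π/2`, so `cos (Im z) > 0`;
the real part of the equation, `Re z = κ e^{-Re z} cos (Im z)`, is then negative, a contradiction.
-/

open Real

namespace Complex

lemma norm_eq_of_eq_mul_exp_neg {c z : ℂ} (hz : z = c * exp (-z)) :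
    ‖z‖ = ‖c‖ * Real.exp (-z.re) := by
  conv_lhs => rw [hz]
  rw [norm_mul, norm_exp, neg_re]

lemma abs_im_le_norm_of_eq_mul_exp_neg {c z : ℂ} (hz : z = c * exp (-z)) (hre : 0 ≤ z.re) :
    |z.im| ≤ ‖c‖ :=
  calc |z.im| ≤ ‖z‖ := abs_im_le_norm z
    _ = ‖c‖ * Real.exp (-z.re) := norm_eq_of_eq_mul_exp_neg hz
    _ ≤ ‖c‖ * 1 := by gcongr; exact Real.exp_le_one_iff.mpr (neg_nonpos.mpr hre)
    _ = ‖c‖ := mul_one _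

lemma re_eq_of_eq_ofReal_mul_exp_neg {κ : ℝ} {z : ℂ} (hz : z = κ * exp (-z)) :
    z.re = κ * (Real.exp (-z.re) * Real.cos z.im) := by
  simpa [exp_re, mul_re] using congrArg re hz

end Complex

/-- For `κ ∈ (−π/2, 0)`, every complex root `λ` of the characteristic equation
`λ = κ·exp(−λ)` of the delay equation `ẋ(t) = κ x(t−1)` has negative real part. -/
theorem stmt_0 (κ : ℝ) (hκ₁ : -(π / 2) < κ) (hκ₂ : κ < 0)
    (z : ℂ) (hz : z = (κ : ℂ) * Complex.exp (-z)) : z.re < 0 := by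
  by_contra! hre
  have him : |z.im| < π / 2 := by
    have := Complex.abs_im_le_norm_of_eq_mul_exp_neg hz hre
    rw [Complex.norm_real, Real.norm_of_nonpos hκ₂.le] at this
    linarith
  have hcos : 0 < Real.cos z.im := Real.cos_pos_of_mem_Ioo (abs_lt.mp him)
  have hneg : κ * (Real.exp (-z.re) * Real.cos z.im) < 0 :=
    mul_neg_of_neg_of_pos hκ₂ (mul_pos (Real.exp_pos _) hcos)
  linarith [Complex.re_eq_of_eq_ofReal_mul_exp_neg hz]
end

section
/- The complex numbers λ = iπ/2 and λ = −iπ/2 satisfy λ + (π/2)·exp(−λ) = 0, and every other complex solution λ of λ + (π/2)·exp(−λ) = 0 satisfies Re λ < 0. -/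
open Real

/-- `λ = ±iπ/2` satisfy `λ + (π/2)·exp(−λ) = 0`, and every other complex solution
has negative real part. -/
theorem stmt_1 :
    (Complex.I * (π / 2) + (π / 2) * Complex.exp (-(Complex.I * (π / 2))) = 0) ∧
    (-(Complex.I * (π / 2)) + (π / 2) * Complex.exp (-(-(Complex.I * (π / 2)))) = 0) ∧
    (∀ z : ℂ, z + (π / 2) * Complex.exp (-z) = 0 →
      z ≠ Complex.I * (π / 2) → z ≠ -(Complex.I * (π / 2)) → z.re < 0) := by
  have hexp1 : Complex.exp (-(Complex.I * (π / 2))) = -Complex.I := by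
    have h : -(Complex.I * ((π : ℂ) / 2)) = ((-(π/2) : ℝ) : ℂ) * Complex.I := by
      push_cast; ring
    rw [h, Complex.exp_mul_I, ← Complex.ofReal_cos, ← Complex.ofReal_sin]
    simp [Real.cos_pi_div_two, Real.sin_pi_div_two]
  have hexp2 : Complex.exp (Complex.I * (π / 2)) = Complex.I := by
    have h : Complex.I * ((π : ℂ) / 2) = (((π/2) : ℝ) : ℂ) * Complex.I := by
      push_cast; ring
    rw [h, Complex.exp_mul_I, ← Complex.ofReal_cos, ← Complex.ofReal_sin]
    simp [Real.cos_pi_div_two, Real.sin_pi_div_two]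
  refine ⟨by rw [hexp1]; ring, by rw [neg_neg, hexp2]; ring, ?_⟩
  intro z hz hz1 hz2
  by_contra hre
  push_neg at hre
  set x := z.re with hx
  set y := z.im with hy
  have hpi : (0:ℝ) < π := Real.pi_pos
  have hE : (0:ℝ) < Real.exp (-x) := Real.exp_pos _
  have hRe : x + (π/2) * (Real.exp (-x) * Real.cos y) = 0 := by
    have := congrArg Complex.re hz
    simpa [Complex.exp_re, Complex.add_re, Complex.mul_re, Complex.neg_re,
      Complex.neg_im, Real.cos_neg] using this
  have hIm : y - (π/2) * (Real.exp (-x) * Real.sin y) = 0 := by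
    have := congrArg Complex.im hz
    simp [Complex.exp_im, Complex.add_im, Complex.mul_im, Complex.neg_re,
      Complex.neg_im, Real.sin_neg] at this
    linarith
  have hc : (π/2) * (Real.exp (-x) * Real.cos y) = -x := by linarith
  have hs : (π/2) * (Real.exp (-x) * Real.sin y) = y := by linarith
  have hE1 : Real.exp (-x) ≤ 1 := Real.exp_le_one_iff.mpr (by linarith)
  have hpyth := Real.sin_sq_add_cos_sq y
  have hsq : x^2 + y^2 = (π/2)^2 * Real.exp (-x)^2 := by
    linear_combination (x - (π/2)*(Real.exp (-x) * Real.cos y)) * hc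
      + (-(y + (π/2)*(Real.exp (-x) * Real.sin y))) * hs
      + ((π/2)^2 * Real.exp (-x)^2) * hpyth
  have hE2 : Real.exp (-x)^2 ≤ 1 := by nlinarith
  have hy2 : y^2 ≤ (π/2)^2 := by nlinarith [sq_nonneg x, sq_nonneg (π/2)]
  have hyub : y ≤ π/2 := by nlinarith [sq_nonneg (y - π/2)]
  have hylb : -(π/2) ≤ y := by nlinarith [sq_nonneg (y + π/2)]
  have hcos : 0 ≤ Real.cos y :=
    Real.cos_nonneg_of_neg_pi_div_two_le_of_le hylb hyub
  have hnn : 0 ≤ (π/2) * (Real.exp (-x) * Real.cos y) :=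
    mul_nonneg (by positivity) (mul_nonneg hE.le hcos)
  have hx0 : x = 0 := by linarith
  rw [hx0, neg_zero, Real.exp_zero] at hRe hIm
  have h1 : π/2 * Real.cos y = 0 := by linarith [hRe]
  have hcos0 : Real.cos y = 0 := by
    rcases mul_eq_zero.mp h1 with h | h
    · exact absurd h (by positivity)
    · exact h
  have h2 : (Real.sin y - 1) * (Real.sin y + 1) = 0 := by
    linear_combination hpyth - hcos0 * Real.cos y
  rcases mul_eq_zero.mp h2 with h | h
  · apply hz1
    apply Complex.ext
    · simp [← hx, hx0]
    · have hs1 : Real.sin y = 1 := by linarith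
      rw [hs1] at hIm
      simp [← hy]
      linarith
  · apply hz2
    apply Complex.ext
    · simp [← hx, hx0]
    · have hs1 : Real.sin y = -1 := by linarith
      rw [hs1] at hIm
      simp [← hy]
      linarith
end

section
/- For every real number κ < −π/2 there exists a complex number λ with Re λ > 0 satisfying λ = κ·exp(−λ). -/
open Real

/-- For every real `κ < −π/2` the characteristic equation `λ = κ·exp(−λ)` has a
root with positive real part. -/
theorem stmt_2 (κ : ℝ) (hκ : κ < -(π / 2)) :
    ∃ z : ℂ, 0 < z.re ∧ z = (κ : ℂ) * Complex.exp (-z) := by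
  have hπ := Real.pi_pos
  have hκ0 : 0 < -κ := by linarith
  set g : ℝ → ℝ := fun y => y * Real.exp (-(y * Real.cos y) / Real.sin y) / Real.sin y with hg
  set δ : ℝ := min ((π/2) / (-κ)) (π/2) / 2 with hδdef
  have hδpos : 0 < δ := by
    have : 0 < min ((π/2) / (-κ)) (π/2) := lt_min (by positivity) (by positivity)
    positivity
  have hδle : δ ≤ π/4 := by
    have : min ((π/2) / (-κ)) (π/2) ≤ π/2 := min_le_right _ _
    simp only [hδdef]; linarith
  set b : ℝ := π - δ with hbdef
  have hbπ : b < π := by simp only [hbdef]; linarith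
  have hb2 : π/2 < b := by simp only [hbdef]; linarith
  have hsinb_pos : 0 < Real.sin b := Real.sin_pos_of_pos_of_lt_pi (by linarith) hbπ
  have hsinb_lt : Real.sin b < (π/2) / (-κ) := by
    have h1 : Real.sin b = Real.sin δ := by
      rw [hbdef, Real.sin_pi_sub]
    have h2 : Real.sin δ < δ := Real.sin_lt hδpos
    have h3 : δ < min ((π/2) / (-κ)) (π/2) := by simp only [hδdef]; linarith [hδpos]
    calc Real.sin b = Real.sin δ := h1
      _ < δ := h2
      _ < min ((π/2) / (-κ)) (π/2) := h3
      _ ≤ (π/2) / (-κ) := min_le_left _ _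
  have hsin : ∀ y ∈ Set.Icc (π/2) b, Real.sin y ≠ 0 := by
    intro y hy
    exact ne_of_gt (Real.sin_pos_of_pos_of_lt_pi (by linarith [hy.1]) (lt_of_le_of_lt hy.2 hbπ))
  have hcont : ContinuousOn g (Set.Icc (π/2) b) := by
    apply ContinuousOn.div
    · exact continuousOn_id.mul (Real.continuous_exp.comp_continuousOn
        (((continuousOn_id.mul Real.continuous_cos.continuousOn).neg).div
          Real.continuous_sin.continuousOn hsin))
    · exact Real.continuous_sin.continuousOn
    · exact hsin
  have hgpi2 : g (π/2) = π/2 := by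
    simp [hg, Real.cos_pi_div_two, Real.sin_pi_div_two]
  have hgb : -κ ≤ g b := by
    have hcosb : Real.cos b ≤ 0 := Real.cos_nonpos_of_pi_div_two_le_of_le (le_of_lt hb2) (by linarith)
    have ht : 0 ≤ -(b * Real.cos b) / Real.sin b := by
      apply div_nonneg _ (le_of_lt hsinb_pos)
      nlinarith
    have hexp : (1:ℝ) ≤ Real.exp (-(b * Real.cos b) / Real.sin b) := Real.one_le_exp ht
    have h1 : π/2 ≤ b * Real.exp (-(b * Real.cos b) / Real.sin b) := by
      nlinarith
    have h2 : π/2 / Real.sin b ≤ g b := by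
      simp only [hg]
      exact div_le_div_of_nonneg_right h1 hsinb_pos.le |>.trans_eq rfl
    have h3 : -κ < π/2 / Real.sin b := by
      rw [lt_div_iff₀ hsinb_pos]
      calc -κ * Real.sin b < -κ * ((π/2) / (-κ)) := by
            exact mul_lt_mul_of_pos_left hsinb_lt hκ0
        _ = π/2 := by
            rw [mul_div_cancel₀ _ (ne_of_gt hκ0)]
    linarith
  have hmem : -κ ∈ Set.Icc (g (π/2)) (g b) := ⟨by rw [hgpi2]; linarith, hgb⟩
  obtain ⟨y, hyIcc, hgy⟩ := intermediate_value_Icc (le_of_lt hb2) hcont hmem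
  have hy1 : π/2 ≤ y := hyIcc.1
  have hyπ : y < π := lt_of_le_of_lt hyIcc.2 hbπ
  have hsiny : 0 < Real.sin y := Real.sin_pos_of_pos_of_lt_pi (by linarith) hyπ
  have hy1' : π/2 < y := by
    rcases eq_or_lt_of_le hy1 with h | h
    · exfalso
      rw [← h] at hgy
      rw [hgpi2] at hgy
      linarith
    · exact h
  have hcosy : Real.cos y < 0 := Real.cos_neg_of_pi_div_two_lt_of_lt hy1' (by linarith)
  set x : ℝ := -(y * Real.cos y) / Real.sin y with hx
  have hxpos : 0 < x := by
    apply div_pos _ hsiny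
    nlinarith
  refine ⟨⟨x, y⟩, hxpos, ?_⟩
  have hgy' : y * Real.exp x / Real.sin y = -κ := hgy
  have hexpx : Real.exp x ≠ 0 := Real.exp_ne_zero x
  have hκe : κ * Real.sin y = -(y * Real.exp x) := by
    have h := hgy'
    field_simp at h
    linarith
  have hκ2 : κ * (Real.exp x)⁻¹ = -(y / Real.sin y) := by
    field_simp
    linarith [hκe]
  apply Complex.ext
  · simp only [Complex.mul_re, Complex.ofReal_re, Complex.ofReal_im, Complex.exp_re, Complex.exp_im,
      Complex.neg_re, Complex.neg_im, Real.cos_neg, Real.sin_neg, zero_mul, sub_zero, add_zero]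
    rw [Real.exp_neg, ← mul_assoc, hκ2, hx]
    field_simp
  · simp only [Complex.mul_im, Complex.ofReal_re, Complex.ofReal_im, Complex.exp_re, Complex.exp_im,
      Complex.neg_re, Complex.neg_im, Real.cos_neg, Real.sin_neg, zero_mul, sub_zero, add_zero]
    rw [Real.exp_neg, ← mul_assoc, hκ2]
    field_simp
end

section
/- Let c = (1 + iπ/2)⁻¹ and ω_c = π/2. Suppose x : ℝ → ℝ is differentiable and satisfies x′(t) = −(π/2)·x(t−1) for all t ∈ ℝ. Define z(t) = c·( x(t) − (π/2)·∫_{−1}^{0} exp(−iω_c(s+1))·x(t+s) ds ). Then z is differentiable and z′(t) = iω_c·z(t) for all t ∈ ℝ. -/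
open Real

/-- The critical-mode projection
`z(t) = c·( x(t) − (π/2)·∫_{−1}^{0} exp(−iω_c(s+1))·x(t+s) ds )`
with `c = (1 + iπ/2)⁻¹` and `ω_c = π/2`. -/
noncomputable def z4 (x : ℝ → ℝ) (t : ℝ) : ℂ :=
  (1 + Complex.I * (π / 2))⁻¹ *
    ((x t : ℂ) -
      (π / 2) * ∫ s in (-1 : ℝ)..0,
        Complex.exp (-(Complex.I * (π / 2) * (s + 1))) * (x (t + s) : ℂ))

noncomputable def hf4 (x : ℝ → ℝ) (u : ℝ) : ℂ :=
  Complex.exp (-(Complex.I * (π / 2) * u)) * (x u : ℂ)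

noncomputable def F4 (x : ℝ → ℝ) (t : ℝ) : ℂ := ∫ u in (0:ℝ)..t, hf4 x u

lemma cont_hf4 {x : ℝ → ℝ} (hx : Continuous x) : Continuous (hf4 x) := by
  unfold hf4; fun_prop

lemma z4_eq {x : ℝ → ℝ} (hx : Continuous x) (t : ℝ) :
    z4 x t = (1 + Complex.I * (π / 2))⁻¹ *
      ((x t : ℂ) - (π / 2) *
        (Complex.exp (Complex.I * (π / 2) * ((t:ℂ) - 1)) * (F4 x t - F4 x (t - 1)))) := by
  have hi : ∀ a b : ℝ, IntervalIntegrable (hf4 x) MeasureTheory.volume a b :=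
    fun a b => (cont_hf4 hx).intervalIntegrable a b
  unfold z4
  congr 2
  have h1 : (∫ s in (-1:ℝ)..0,
      Complex.exp (-(Complex.I * (π / 2) * (s + 1))) * (x (t + s) : ℂ))
      = ∫ s in (-1:ℝ)..0,
        (fun u : ℝ => Complex.exp (-(Complex.I * (π / 2) * ((u:ℂ) - t + 1))) * (x u : ℂ)) (s + t) := by
    apply intervalIntegral.integral_congr
    intro s _
    simp only [add_comm t s]
    push_cast
    ring_nf
  rw [h1, intervalIntegral.integral_comp_add_right
    (fun u : ℝ => Complex.exp (-(Complex.I * (π / 2) * ((u:ℂ) - t + 1))) * (x u : ℂ)) t]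
  have h2 : (∫ u in (-1 + t)..(0 + t),
      Complex.exp (-(Complex.I * (π / 2) * ((u:ℂ) - t + 1))) * (x u : ℂ))
      = Complex.exp (Complex.I * (π / 2) * ((t:ℂ) - 1)) * ∫ u in (t - 1)..t, hf4 x u := by
    rw [← intervalIntegral.integral_const_mul]
    rw [show (-1 + t) = t - 1 by ring, zero_add]
    apply intervalIntegral.integral_congr
    intro u _
    show Complex.exp (-(Complex.I * (π / 2) * ((u:ℂ) - t + 1))) * (x u : ℂ)
        = Complex.exp (Complex.I * (π / 2) * ((t:ℂ) - 1)) *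
          (Complex.exp (-(Complex.I * (π / 2) * u)) * (x u : ℂ))
    rw [← mul_assoc, ← Complex.exp_add]
    congr 2
    ring
  rw [h2]
  congr 1
  rw [← intervalIntegral.integral_interval_sub_left (hi 0 t) (hi 0 (t-1))]
  rfl

/-- If `x` is differentiable and solves `ẋ(t) = −(π/2)x(t−1)` on all of `ℝ`, then
the critical projection `z` is differentiable with `z′(t) = iω_c z(t)`, `ω_c = π/2`. -/
theorem stmt_4 (x : ℝ → ℝ) (hx : Differentiable ℝ x)
    (hode : ∀ t : ℝ, deriv x t = -(π / 2) * x (t - 1)) :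
    Differentiable ℝ (z4 x) ∧
      ∀ t : ℝ, deriv (z4 x) t = Complex.I * (π / 2) * z4 x t := by
  have hxc : Continuous x := hx.continuous
  have hcont : Continuous (hf4 x) := cont_hf4 hxc
  have hi : ∀ a b : ℝ, IntervalIntegrable (hf4 x) MeasureTheory.volume a b :=
    fun a b => hcont.intervalIntegrable a b
  have ee : Complex.exp (-(Complex.I * (π / 2))) = -Complex.I := by
    have : (-(Complex.I * (π / 2))) = ((-(π/2) : ℝ) : ℂ) * Complex.I := by push_cast; ring
    rw [this, Complex.exp_mul_I, ← Complex.ofReal_cos, ← Complex.ofReal_sin]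
    rw [Real.cos_neg, Real.sin_neg, Real.cos_pi_div_two, Real.sin_pi_div_two]
    push_cast; ring
  have hz : ∀ t : ℝ, HasDerivAt (z4 x) (Complex.I * (π / 2) * z4 x t) t := by
    intro t
    -- derivative of F4
    have hF : ∀ s : ℝ, HasDerivAt (F4 x) (hf4 x s) s := by
      intro s
      exact intervalIntegral.integral_hasDerivAt_right (hi 0 s)
        (hcont.aestronglyMeasurable.stronglyMeasurableAtFilter) hcont.continuousAt
    have hFs : HasDerivAt (fun u : ℝ => F4 x (u - 1)) (hf4 x (t - 1)) t :=
      HasDerivAt.comp_sub_const t 1 (hF (t - 1))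
    have hE : HasDerivAt (fun u : ℝ => Complex.exp (Complex.I * (π / 2) * ((u:ℂ) - 1)))
        (Complex.exp (Complex.I * (π / 2) * ((t:ℂ) - 1)) * (Complex.I * (π / 2))) t := by
      have h0 : HasDerivAt (fun u : ℝ => Complex.I * (π / 2) * ((u:ℂ) - 1))
          (Complex.I * (π / 2)) t := by
        have : HasDerivAt (fun u : ℝ => ((u:ℂ) - 1)) 1 t := by
          simpa using (Complex.ofRealCLM.hasDerivAt (x := t)).sub_const 1
        simpa using this.const_mul (Complex.I * (π / 2))
      exact h0.cexp
    have hX : HasDerivAt (fun u : ℝ => (x u : ℂ)) ((deriv x t : ℝ) : ℂ) t :=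
      (hx t).hasDerivAt.ofReal_comp
    set E := Complex.exp (Complex.I * (π / 2) * ((t:ℂ) - 1)) with hEdef
    have hG : HasDerivAt
        (fun u : ℝ => (1 + Complex.I * (π / 2))⁻¹ *
          ((x u : ℂ) - (π / 2) *
            (Complex.exp (Complex.I * (π / 2) * ((u:ℂ) - 1)) * (F4 x u - F4 x (u - 1)))))
        ((1 + Complex.I * (π / 2))⁻¹ *
          (((deriv x t : ℝ) : ℂ) - (π / 2) *
            (E * (Complex.I * (π / 2)) * (F4 x t - F4 x (t - 1)) +
              E * (hf4 x t - hf4 x (t - 1))))) t := by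
      exact ((hX.sub (((hE.mul ((hF t).sub hFs))).const_mul ((π:ℂ) / 2))).const_mul
        ((1 + Complex.I * (π / 2))⁻¹))
    have e1 : E * hf4 x t = -Complex.I * ((x t : ℝ) : ℂ) := by
      show E * (Complex.exp (-(Complex.I * (π / 2) * (t:ℂ))) * ((x t : ℝ) : ℂ)) = _
      rw [hEdef, ← mul_assoc, ← Complex.exp_add,
        show Complex.I * (π / 2) * ((t:ℂ) - 1) + -(Complex.I * (π / 2) * (t:ℂ))
          = -(Complex.I * (π / 2)) by ring, ee]
    have e2 : E * hf4 x (t - 1) = ((x (t - 1) : ℝ) : ℂ) := by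
      show E * (Complex.exp (-(Complex.I * (π / 2) * ((t - 1 : ℝ) : ℂ))) *
        ((x (t - 1) : ℝ) : ℂ)) = _
      rw [hEdef, ← mul_assoc, ← Complex.exp_add,
        show Complex.I * (π / 2) * ((t:ℂ) - 1) + -(Complex.I * (π / 2) * ((t - 1 : ℝ) : ℂ))
          = 0 by push_cast; ring, Complex.exp_zero, one_mul]
    have hd : ((deriv x t : ℝ) : ℂ) = -((π:ℂ) / 2) * ((x (t - 1) : ℝ) : ℂ) := by
      rw [hode t]; push_cast; ring
    have hzfun : z4 x = fun u : ℝ => (1 + Complex.I * (π / 2))⁻¹ *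
        ((x u : ℂ) - (π / 2) *
          (Complex.exp (Complex.I * (π / 2) * ((u:ℂ) - 1)) * (F4 x u - F4 x (u - 1)))) :=
      funext (z4_eq hxc)
    rw [hzfun]
    convert hG using 1
    simp only
    rw [← hEdef]
    linear_combination (-(1 + Complex.I * (π / 2))⁻¹) * hd
      + (1 + Complex.I * (π / 2))⁻¹ * ((π:ℂ)/2) * e1
      - (1 + Complex.I * (π / 2))⁻¹ * ((π:ℂ)/2) * e2
  exact ⟨fun t => (hz t).differentiableAt, fun t => (hz t).deriv⟩
end

section
/- Let ω₀, η, κ, β, r, ω_c be real numbers satisfying the characteristic equation −iω_c β − ω_c² + (η − iκω_c)·exp(−iω_c r) + ω₀² = 0, and suppose the complex number D = ω_c² + exp(−iω_c r)·(η + i η r ω_c + κ r ω_c²) + ω₀² is nonzero; set c = D⁻¹. Define, for θ ∈ [−r, 0], the row vector function Ψ₁(θ) = c·( ω₀² + η·exp(−iω_c r), −iω_c )·exp(−iω_c θ) and the column vector functions Φ₁(θ) = (1, iω_c)·exp(iω_c θ) and Φ₂(θ) = (1, −iω_c)·exp(−iω_c θ). Then, with the bilinear form ⟨ψ, φ⟩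 = ψ₁(0)φ₁(0) + ψ₂(0)φ₂(0) + ∫_{−r}^{0} ψ₂(s+r)·( −η·φ₁(s) + κ·φ₂(s) ) ds, one has ⟨Ψ₁, Φ₁⟩ = 1 and ⟨Ψ₁, Φ₂⟩ = 0. -/
/-!
Φ₁, Φ₂ and Ψ₁ are exponential modes θ ↦ e^{μθ} v, on which the delay term of the bilinear form
is a multiple of `∫_{−r}^0 e^{(μ+ν)s} ds`. For ⟨Ψ₁, Φ₁⟩ the exponents cancel,
the integral is `r`, and the pairing is `c D = 1`. For ⟨Ψ₁, Φ₂⟩ the integral is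
`(1 − e^{2iω_c r}) / (2iω_c)`, and the pairing becomes `c` times the real part of the characteristic
function at `iω_c`, which vanishes.
-/

open Real

/-- Bilinear form
`⟨ψ, φ⟩ = ψ₁(0)φ₁(0) + ψ₂(0)φ₂(0) + ∫_{−r}^{0} ψ₂(s+r)(−ηφ₁(s) + κφ₂(s)) ds`
for the two-dimensional delayed van der Pol-type oscillator. -/
noncomputable def pair9 (η κ r : ℝ) (ψ φ : ℝ → ℂ × ℂ) : ℂ :=
  (ψ 0).1 * (φ 0).1 + (ψ 0).2 * (φ 0).2 +
    ∫ s in (-r : ℝ)..0, (ψ (s + r)).2 * (-(η : ℂ) * (φ s).1 + (κ : ℂ) * (φ s).2)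

/-- Adjoint eigenfunction `Ψ₁(θ) = c·(ω₀² + η e^{−iω_c r}, −iω_c)·e^{−iω_c θ}`. -/
noncomputable def Ψ91 (ω0 η r ωc : ℝ) (c : ℂ) (θ : ℝ) : ℂ × ℂ :=
  (c * ((ω0 : ℂ) ^ 2 + (η : ℂ) * Complex.exp (-(Complex.I * ωc * r))) *
      Complex.exp (-(Complex.I * ωc * θ)),
   c * (-(Complex.I * ωc)) * Complex.exp (-(Complex.I * ωc * θ)))

/-- Eigenfunction `Φ₁(θ) = (1, iω_c)·e^{iω_c θ}`. -/
noncomputable def Φ91 (ωc : ℝ) (θ : ℝ) : ℂ × ℂ :=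
  (Complex.exp (Complex.I * ωc * θ), Complex.I * ωc * Complex.exp (Complex.I * ωc * θ))

/-- Eigenfunction `Φ₂(θ) = (1, −iω_c)·e^{−iω_c θ}`. -/
noncomputable def Φ92 (ωc : ℝ) (θ : ℝ) : ℂ × ℂ :=
  (Complex.exp (-(Complex.I * ωc * θ)),
   -(Complex.I * ωc) * Complex.exp (-(Complex.I * ωc * θ)))

open Complex

theorem mul_integral_exp_mul_complex (z : ℂ) (a b : ℝ) :
    z * ∫ x in a..b, exp (z * x) = exp (z * b) - exp (z * a) := by
  rcases eq_or_ne z 0 with rfl | hz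
  · simp
  · rw [integral_exp_mul_complex hz, mul_div_cancel₀ _ hz]

noncomputable def expVec (μ : ℂ) (v : ℂ × ℂ) (θ : ℝ) : ℂ × ℂ :=
  exp (μ * θ) • v

theorem pair9_expVec (η κ r : ℝ) (μ ν : ℂ) (v w : ℂ × ℂ) :
    pair9 η κ r (expVec μ v) (expVec ν w) =
      v.1 * w.1 + v.2 * w.2 +
        v.2 * exp (μ * r) * (-η * w.1 + κ * w.2) * ∫ s in (-r)..0, exp ((μ + ν) * s) := by
  have hint : ∀ s : ℝ, (expVec μ v (s + r)).2 * (-η * (expVec ν w s).1 + κ * (expVec ν w s).2) =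
      v.2 * exp (μ * r) * (-η * w.1 + κ * w.2) * exp ((μ + ν) * s) := by
    intro s
    simp only [expVec, Prod.smul_fst, Prod.smul_snd, smul_eq_mul, ofReal_add, add_mul, mul_add,
      Complex.exp_add]
    ring
  simp only [pair9, hint, intervalIntegral.integral_const_mul]
  simp [expVec]

theorem Ψ91_eq_expVec (ω0 η r ωc : ℝ) (c : ℂ) :
    Ψ91 ω0 η r ωc c = expVec (-(I * ωc))
      (c * ((ω0 : ℂ) ^ 2 + η * exp (-(I * ωc * r))), c * (-(I * ωc))) := by
  ext θ <;> simp only [Ψ91, expVec, Prod.smul_fst, Prod.smul_snd, smul_eq_mul, neg_mul] <;> ring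

theorem Φ91_eq_expVec (ωc : ℝ) : Φ91 ωc = expVec (I * ωc) (1, I * ωc) := by
  ext θ <;> simp only [Φ91, expVec, Prod.smul_fst, Prod.smul_snd, smul_eq_mul] <;> ring

theorem Φ92_eq_expVec (ωc : ℝ) : Φ92 ωc = expVec (-(I * ωc)) (1, -(I * ωc)) := by
  ext θ <;> simp only [Φ92, expVec, Prod.smul_fst, Prod.smul_snd, smul_eq_mul, neg_mul] <;> ring

theorem pair9_Ψ91_Φ91 (ω0 η κ r ωc : ℝ) (c : ℂ) :
    pair9 η κ r (Ψ91 ω0 η r ωc c) (Φ91 ωc) =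
      c * ((ωc : ℂ) ^ 2 + exp (-(I * ωc * r)) * (η + I * η * r * ωc + κ * r * (ωc : ℂ) ^ 2) +
        (ω0 : ℂ) ^ 2) := by
  rw [Ψ91_eq_expVec, Φ91_eq_expVec, pair9_expVec, neg_add_cancel]
  simp only [zero_mul, Complex.exp_zero, intervalIntegral.integral_const, sub_neg_eq_add,
    zero_add, real_smul, mul_one, neg_mul]
  linear_combination (-(c * ωc ^ 2) - κ * c * exp (-(I * ωc * r)) * r * ωc ^ 2) * I_sq

theorem pair9_Ψ91_Φ92 (ω0 η κ β r ωc : ℝ) (c : ℂ)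
    (hchar : -(I * ωc * β) - (ωc : ℂ) ^ 2 + ((η : ℂ) - I * κ * ωc) * exp (-(I * ωc * r)) +
      (ω0 : ℂ) ^ 2 = 0) :
    pair9 η κ r (Ψ91 ω0 η r ωc c) (Φ92 ωc) = 0 := by
  rw [Ψ91_eq_expVec, Φ92_eq_expVec, pair9_expVec, neg_mul]
  set em := exp (-(I * ωc * r))
  set ep := exp (I * ωc * r)
  have hchar_conj : I * ωc * β - (ωc : ℂ) ^ 2 + ((η : ℂ) + I * κ * ωc) * ep + (ω0 : ℂ) ^ 2 = 0 := by
    simpa [ep, em, ← Complex.exp_conj] using congrArg (starRingEnd ℂ) hchar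
  have hemep : em * ep = 1 := by rw [← Complex.exp_add]; simp
  have hint := mul_integral_exp_mul_complex (-(I * ωc) + -(I * ωc)) (-r) 0
  have hexp_two : exp ((-(I * ωc) + -(I * ωc)) * (-r : ℝ)) = ep * ep := by
    rw [← Complex.exp_add]; congr 1; push_cast; ring
  rw [hexp_two, ofReal_zero, mul_zero, Complex.exp_zero] at hint
  linear_combination c / 2 * (hchar + hchar_conj) + c / 2 * em * (-η - κ * I * ωc) * hint +
    c / 2 * (η + κ * I * ωc) * ep * hemep + c * ωc ^ 2 * I_sq

/-- Biorthonormality `⟨Ψ₁, Φ₁⟩ = 1`, `⟨Ψ₁, Φ₂⟩ = 0` for the delayed van der Pol-type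
oscillator at the verge of instability. -/
theorem stmt_9 (ω0 η κ β r ωc : ℝ)
    (hchar : -(Complex.I * ωc * β) - (ωc : ℂ) ^ 2 +
        ((η : ℂ) - Complex.I * κ * ωc) * Complex.exp (-(Complex.I * ωc * r)) +
        (ω0 : ℂ) ^ 2 = 0)
    (D : ℂ)
    (hD : D = (ωc : ℂ) ^ 2 +
        Complex.exp (-(Complex.I * ωc * r)) *
          ((η : ℂ) + Complex.I * η * r * ωc + (κ : ℂ) * r * (ωc : ℂ) ^ 2) +
        (ω0 : ℂ) ^ 2)
    (hD0 : D ≠ 0) (c : ℂ) (hc : c = D⁻¹) :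
    pair9 η κ r (Ψ91 ω0 η r ωc c) (Φ91 ωc) = 1 ∧
    pair9 η κ r (Ψ91 ω0 η r ωc c) (Φ92 ωc) = 0 := by
  refine ⟨?_, pair9_Ψ91_Φ92 ω0 η κ β r ωc c hchar⟩
  rw [pair9_Ψ91_Φ91, ← hD, hc, inv_mul_cancel₀ hD0]
end

section
/- Let ω₀, η, κ, β_c, r, ω_c be real numbers satisfying the characteristic equation −iω_c β_c − ω_c² + (η − iκω_c)·exp(−iω_c r) + ω₀² = 0, and let D = ω_c² + exp(−iω_c r)·(η + i η r ω_c + κ r ω_c²) + ω₀². Then D + conj(D) = 2ω_c²(1 + cos²(ω_c r)) + 2ω₀²(1 − cos²(ω_c r)) − β_c ω_c (2rω_c + sin(2ω_c r)). -/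
open Real

/-- Closed form for `D + conj D`, where `D⁻¹` is the adjoint normalization constant
of the delayed van der Pol-type oscillator at the verge of instability. -/
theorem stmt_10 (ω0 η κ βc r ωc : ℝ)
    (hchar : -(Complex.I * ωc * βc) - (ωc : ℂ) ^ 2 +
        ((η : ℂ) - Complex.I * κ * ωc) * Complex.exp (-(Complex.I * ωc * r)) +
        (ω0 : ℂ) ^ 2 = 0)
    (D : ℂ)
    (hD : D = (ωc : ℂ) ^ 2 +
        Complex.exp (-(Complex.I * ωc * r)) *
          ((η : ℂ) + Complex.I * η * r * ωc + (κ : ℂ) * r * (ωc : ℂ) ^ 2) +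
        (ω0 : ℂ) ^ 2) :
    D + (starRingEnd ℂ) D =
      ((2 * ωc ^ 2 * (1 + Real.cos (ωc * r) ^ 2) +
          2 * ω0 ^ 2 * (1 - Real.cos (ωc * r) ^ 2) -
          βc * ωc * (2 * r * ωc + Real.sin (2 * ωc * r)) : ℝ) : ℂ) := by
  have hexp : Complex.exp (-(Complex.I * ωc * r)) =
      (Real.cos (ωc * r) : ℂ) - Complex.I * (Real.sin (ωc * r) : ℂ) := by
    have h : -(Complex.I * ωc * r) = ((-(ωc * r) : ℝ) : ℂ) * Complex.I := by
      push_cast; ring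
    rw [h, Complex.exp_mul_I, ← Complex.ofReal_cos, ← Complex.ofReal_sin,
      Real.cos_neg, Real.sin_neg]
    push_cast; ring
  rw [hexp] at hchar hD
  set c := Real.cos (ωc * r)
  set s := Real.sin (ωc * r)
  have hsc : s ^ 2 + c ^ 2 = 1 := Real.sin_sq_add_cos_sq _
  rw [Complex.ext_iff] at hchar
  simp only [← Complex.ofReal_pow, Complex.add_re, Complex.add_im, Complex.sub_re,
    Complex.sub_im, Complex.neg_re, Complex.neg_im, Complex.mul_re, Complex.mul_im,
    Complex.I_re, Complex.I_im, Complex.ofReal_re, Complex.ofReal_im,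
    Complex.zero_re, Complex.zero_im] at hchar
  obtain ⟨h1, h2⟩ := hchar
  have h2s : Real.sin (2 * ωc * r) = 2 * s * c := by
    have h3 : 2 * ωc * r = 2 * (ωc * r) := by ring
    rw [h3, Real.sin_two_mul]
  rw [Complex.add_conj, h2s]
  norm_cast
  have hre : D.re = ωc ^ 2 + (c * η + s * (η * r * ωc)) + c * (κ * r * ωc ^ 2) + ω0 ^ 2 := by
    simp only [hD, ← Complex.ofReal_pow, Complex.add_re, Complex.sub_re, Complex.mul_re,
      Complex.mul_im, Complex.add_im, Complex.sub_im, Complex.I_re, Complex.I_im,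
      Complex.ofReal_re, Complex.ofReal_im]
    ring
  rw [hre]
  linear_combination (2*c^2)*h1 - (2*r*ωc + 2*s*c)*h2 - (2*c*η)*hsc
end

section
/- Let ω₀, η, κ, β_c, r, ω_c be real numbers with r ≥ 0, ω_c ≠ 0, and β_c < 0, satisfying the characteristic equation −iω_c β_c − ω_c² + (η − iκω_c)·exp(−iω_c r) + ω₀² = 0, and let D = ω_c² + exp(−iω_c r)·(η + i η r ω_c + κ r ω_c²) + ω₀². Then Re(D) > 0; consequently D ≠ 0 and Re(D⁻¹) > 0. -/
open Real

/-- If the critical damping `β_c` is negative, then the quantity `D` whose inverse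
is the adjoint normalization constant satisfies `Re D > 0`; consequently `D ≠ 0`
and `Re(D⁻¹) > 0`. -/
theorem stmt_11 (ω0 η κ βc r ωc : ℝ)
    (hr : 0 ≤ r) (hωc : ωc ≠ 0) (hβc : βc < 0)
    (hchar : -(Complex.I * ωc * βc) - (ωc : ℂ) ^ 2 +
        ((η : ℂ) - Complex.I * κ * ωc) * Complex.exp (-(Complex.I * ωc * r)) +
        (ω0 : ℂ) ^ 2 = 0)
    (D : ℂ)
    (hD : D = (ωc : ℂ) ^ 2 +
        Complex.exp (-(Complex.I * ωc * r)) *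
          ((η : ℂ) + Complex.I * η * r * ωc + (κ : ℂ) * r * (ωc : ℂ) ^ 2) +
        (ω0 : ℂ) ^ 2) :
    0 < D.re ∧ D ≠ 0 ∧ 0 < (D⁻¹).re := by
  set c : ℝ := Real.cos (ωc * r) with hc
  set s : ℝ := Real.sin (ωc * r) with hs
  have hexp : Complex.exp (-(Complex.I * ωc * r)) = (c : ℂ) - (s : ℂ) * Complex.I := by
    have h : -(Complex.I * ωc * r) = ((-(ωc * r) : ℝ) : ℂ) * Complex.I := by
      push_cast; ring
    rw [h, Complex.exp_mul_I, Complex.ofReal_neg, Complex.cos_neg, Complex.sin_neg,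
      ← Complex.ofReal_cos, ← Complex.ofReal_sin]
    ring
  rw [hexp] at hchar hD
  -- extract real and imaginary parts of the characteristic equation
  have e1 : η * c - κ * ωc * s - ωc ^ 2 + ω0 ^ 2 = 0 := by
    have := congrArg Complex.re hchar
    simp [Complex.add_re, Complex.sub_re, Complex.mul_re, Complex.mul_im,
      ← Complex.ofReal_pow] at this
    linarith [this]
  have e2 : η * s + κ * ωc * c + ωc * βc = 0 := by
    have := congrArg Complex.im hchar
    simp [Complex.add_im, Complex.sub_im, Complex.mul_re, Complex.mul_im,
      ← Complex.ofReal_pow] at this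
    linarith [this]
  have hpy : c ^ 2 + s ^ 2 = 1 := by
    rw [hc, hs]; exact Real.cos_sq_add_sin_sq (ωc * r)
  have hDre : D.re = ωc ^ 2 + ω0 ^ 2 + c * (η + κ * r * ωc ^ 2) + s * η * r * ωc := by
    rw [hD]
    simp [Complex.add_re, Complex.mul_re, Complex.mul_im, ← Complex.ofReal_pow]
    ring
  have hkey : D.re = ωc ^ 2 * (1 + c ^ 2) + s ^ 2 * ω0 ^ 2 - βc * (r * ωc ^ 2 + ωc * c * s) := by
    rw [hDre]
    linear_combination (1 - s ^ 2) * e1 + (r * ωc + c * s) * e2 - (ωc ^ 2 + κ * ωc * s) * hpy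
  -- bound |ωc * c * s| ≤ r * ωc ^ 2
  have habs : |s| ≤ |ωc| * r := by
    have h1 : |s| ≤ |ωc * r| := Real.abs_sin_le_abs
    rwa [abs_mul, abs_of_nonneg hr] at h1
  have hbound : 0 ≤ r * ωc ^ 2 + ωc * c * s := by
    have h1 : |ωc * c * s| ≤ r * ωc ^ 2 := by
      have h2 : |ωc * c * s| = |ωc| * |c| * |s| := by rw [abs_mul, abs_mul]
      have h3 : |c| ≤ 1 := abs_cos_le_one _
      rw [h2]
      nlinarith [mul_le_mul_of_nonneg_left habs (abs_nonneg ωc), sq_abs ωc,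
        abs_nonneg s, abs_nonneg ωc, mul_nonneg (abs_nonneg ωc) (abs_nonneg s)]
    linarith [neg_abs_le (ωc * c * s)]
  have hωc2 : 0 < ωc ^ 2 := by positivity
  have hre : 0 < D.re := by
    have hnb : 0 < -βc := by linarith
    nlinarith [mul_nonneg hnb.le hbound, sq_nonneg (ωc * c), sq_nonneg (s * ω0)]
  have hne : D ≠ 0 := by
    intro h
    rw [h] at hre
    simp at hre
  refine ⟨hre, hne, ?_⟩
  rw [Complex.inv_re]
  exact div_pos hre (Complex.normSq_pos.mpr hne)
end
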